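/- arXiv:2004.03709 — 5 statements merged into one kernel-verified Lean document; each statement's English description precedes it below -/
import Mathlib

section
/- Every quasi-abelian category is semi-abelian: if a preabelian category has the property that cokernels are stable under pullback and kernels are stable under pushout, then every morphism factors as a monomorphism following a cokernel, and also as a kernel following an epimorphism. -/
open CategoryTheory Limits

universe v u

/-- A morphism is "a cokernel" if it is the cokernel of some morphism. -/
def IsCokernelMor {C : Type u} [Category.{v} C] [HasZeroMorphisms C] {X Y : C} (p : X ⟶ Y) : Prop :=
  ∃ (W : C) (g : W ⟶ X) (w : g ≫ p = 0), Nonempty (IsColimit (CokernelCofork.ofπ p w))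

/-- A morphism is "a kernel" if it is the kernel of some morphism. -/
def IsKernelMor {C : Type u} [Category.{v} C] [HasZeroMorphisms C] {X Y : C} (i : X ⟶ Y) : Prop :=
  ∃ (W : C) (g : Y ⟶ W) (w : i ≫ g = 0), Nonempty (IsLimit (KernelFork.ofι i w))

/-- Every quasi-abelian (preabelian) category is semi-abelian. -/
theorem stmt4 {C : Type u} [Category.{v} C] [Preadditive C] [HasKernels C] [HasCokernels C]
    (hLquasi : ∀ {P X Y Z : C} (a : P ⟶ X) (b : P ⟶ Y) (f : X ⟶ Z) (g : Y ⟶ Z),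
        IsPullback a b f g → IsCokernelMor g → IsCokernelMor a)
    (hRquasi : ∀ {Z X Y P : C} (f : Z ⟶ X) (g : Z ⟶ Y) (a : X ⟶ P) (b : Y ⟶ P),
        IsPushout f g a b → IsKernelMor f → IsKernelMor b) :
    (∀ {X Y : C} (f : X ⟶ Y), ∃ (Z : C) (p : X ⟶ Z) (i : Z ⟶ Y),
      IsCokernelMor p ∧ Mono i ∧ p ≫ i = f) ∧
    (∀ {X Y : C} (f : X ⟶ Y), ∃ (Z : C) (q : X ⟶ Z) (j : Z ⟶ Y),
      Epi q ∧ IsKernelMor j ∧ q ≫ j = f) := by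
  constructor
  · -- f = mono ∘ cokernel, via the coimage factorization
    intro X Y f
    set k : kernel f ⟶ X := kernel.ι f with hk
    set p : X ⟶ cokernel k := cokernel.π k with hp
    set i : cokernel k ⟶ Y := cokernel.desc k f (kernel.condition f) with hi
    have hpi : p ≫ i = f := cokernel.π_desc _ _ _
    refine ⟨cokernel k, p, i, ⟨kernel f, k, cokernel.condition k, ⟨cokernelIsCokernel k⟩⟩, ?_, hpi⟩
    -- show `i` is a monomorphism
    set m : kernel i ⟶ cokernel k := kernel.ι i with hm
    -- the pullback of `p` along `m` is `(0, k) : kernel f ⟶ kernel i × X`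
    have comm : (0 : kernel f ⟶ kernel i) ≫ m = k ≫ p := by
      rw [zero_comp]; exact (cokernel.condition k).symm
    have hcond : ∀ s : PullbackCone m p, s.snd ≫ f = 0 := by
      intro s
      have h2 : s.snd ≫ (p ≫ i) = 0 := by
        rw [← Category.assoc, ← s.condition, Category.assoc, kernel.condition, comp_zero]
      rwa [hpi] at h2
    have pb : IsPullback (0 : kernel f ⟶ kernel i) k m p := by
      refine IsPullback.of_isLimit' ⟨comm⟩ ?_
      refine PullbackCone.IsLimit.mk _
        (fun s => kernel.lift f s.snd (hcond s)) (fun s => ?_) (fun s => kernel.lift_ι _ _ _)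
        (fun s t h1 h2 => ?_)
      · have hs : s.snd ≫ p = kernel.lift f s.snd (hcond s) ≫ k ≫ p := by
          rw [← Category.assoc, kernel.lift_ι]
        have : s.fst ≫ m = 0 := by
          rw [s.condition, hs, cokernel.condition, comp_zero]
        have hfst : s.fst = 0 := zero_of_comp_mono m this
        simp [hfst]
      · apply (cancel_mono k).mp
        rw [kernel.lift_ι]
        exact h2
    obtain ⟨W, g, w, ⟨hc⟩⟩ := hLquasi _ _ _ _ pb
      ⟨kernel f, k, cokernel.condition k, ⟨cokernelIsCokernel k⟩⟩
    have hm0 : m = 0 := Cofork.IsColimit.hom_ext hc (by simp)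
    exact Preadditive.mono_of_kernel_zero hm0
  · -- f = kernel ∘ epi, via the image factorization
    intro X Y f
    set c : Y ⟶ cokernel f := cokernel.π f with hc'
    set j : kernel c ⟶ Y := kernel.ι c with hj
    set q : X ⟶ kernel c := kernel.lift c f (cokernel.condition f) with hq
    have hqj : q ≫ j = f := kernel.lift_ι _ _ _
    refine ⟨kernel c, q, j, ?_, ⟨cokernel f, c, kernel.condition c, ⟨kernelIsKernel c⟩⟩, hqj⟩
    -- show `q` is an epimorphism
    set n : kernel c ⟶ cokernel q := cokernel.π q with hn
    have comm : j ≫ c = n ≫ (0 : cokernel q ⟶ cokernel f) := by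
      rw [comp_zero]; exact kernel.condition c
    have hcond : ∀ s : PushoutCocone j n, f ≫ s.inl = 0 := by
      intro s
      have h2 : (q ≫ j) ≫ s.inl = 0 := by
        rw [Category.assoc, s.condition, ← Category.assoc, cokernel.condition, zero_comp]
      rwa [hqj] at h2
    have po : IsPushout j n c (0 : cokernel q ⟶ cokernel f) := by
      refine IsPushout.of_isColimit' ⟨comm⟩ ?_
      refine PushoutCocone.IsColimit.mk _
        (fun s => cokernel.desc f s.inl (hcond s)) (fun s => cokernel.π_desc _ _ _)
        (fun s => ?_) (fun s t h1 h2 => ?_)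
      · have hs : j ≫ s.inl = j ≫ c ≫ cokernel.desc f s.inl (hcond s) := by
          rw [cokernel.π_desc]
        have : n ≫ s.inr = 0 := by
          rw [← s.condition, hs, ← Category.assoc, kernel.condition, zero_comp]
        have hinr : s.inr = 0 := zero_of_epi_comp n this
        simp [hinr]
      · apply (cancel_epi c).mp
        rw [cokernel.π_desc]
        exact h1
    obtain ⟨W, g, w, ⟨hl⟩⟩ := hRquasi _ _ _ _ po
      ⟨cokernel f, c, kernel.condition c, ⟨kernelIsKernel c⟩⟩
    have hn0 : n = 0 := Fork.IsLimit.hom_ext hl (by simp)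
    exact Preadditive.epi_of_cokernel_zero hn0
end

section
/- Every integral category is semi-abelian: if a preabelian category has the property that epimorphisms are stable under pullback and monomorphisms are stable under pushout, then every morphism factors as a monomorphism following a cokernel, and also as a kernel following an epimorphism. -/
open CategoryTheory Limits

universe v u

/-- Every integral (preabelian) category is semi-abelian. -/
theorem stmt5 {C : Type u} [Category.{v} C] [Preadditive C] [HasKernels C] [HasCokernels C]
    (hLint : ∀ {P X Y Z : C} (a : P ⟶ X) (b : P ⟶ Y) (f : X ⟶ Z) (g : Y ⟶ Z),
        IsPullback a b f g → Epi g → Epi a)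
    (hRint : ∀ {Z X Y P : C} (f : Z ⟶ X) (g : Z ⟶ Y) (a : X ⟶ P) (b : Y ⟶ P),
        IsPushout f g a b → Mono f → Mono b) :
    (∀ {X Y : C} (f : X ⟶ Y), ∃ (Z : C) (p : X ⟶ Z) (i : Z ⟶ Y),
      IsCokernelMor p ∧ Mono i ∧ p ≫ i = f) ∧
    (∀ {X Y : C} (f : X ⟶ Y), ∃ (Z : C) (q : X ⟶ Z) (j : Z ⟶ Y),
      Epi q ∧ IsKernelMor j ∧ q ≫ j = f) := by
  constructor
  · -- coimage factorization: f = (cokernel.π (ker f)) ≫ m, with m mono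
    intro X Y f
    set k : kernel f ⟶ X := kernel.ι f with hk
    set p : X ⟶ cokernel k := cokernel.π k with hp
    set m : cokernel k ⟶ Y := cokernel.desc k f (kernel.condition f) with hm
    refine ⟨cokernel k, p, m,
      ⟨kernel f, k, cokernel.condition k, ⟨cokernelIsCokernel k⟩⟩, ?_, cokernel.π_desc _ _ _⟩
    -- show m is mono.  Key: the square (0, k ; kernel.ι m, p) is a pullback
    have hsq : (0 : kernel f ⟶ kernel m) ≫ kernel.ι m = k ≫ p := by
      rw [zero_comp]; exact (cokernel.condition k).symm
    have hpm : p ≫ m = f := cokernel.π_desc _ _ _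
    have hkp : k ≫ p = 0 := cokernel.condition k
    have w : ∀ s : PullbackCone (kernel.ι m) p, s.snd ≫ f = 0 := fun s => by
      calc s.snd ≫ f = s.snd ≫ p ≫ m := by rw [hpm]
        _ = (s.snd ≫ p) ≫ m := by rw [Category.assoc]
        _ = (s.fst ≫ kernel.ι m) ≫ m := by rw [s.condition]
        _ = 0 := by rw [Category.assoc, kernel.condition, comp_zero]
    have hlim : IsLimit (PullbackCone.mk _ _ hsq) := by
      refine PullbackCone.IsLimit.mk hsq
        (fun s => kernel.lift f s.snd (w s)) (fun s => ?_)
        (fun s => kernel.lift_ι _ _ _) (fun s l h₁ h₂ => ?_)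
      · -- lift ≫ 0 = s.fst, i.e. s.fst = 0
        have hsnd : kernel.lift f s.snd (w s) ≫ k = s.snd := kernel.lift_ι _ _ _
        have h0 : s.fst ≫ kernel.ι m = 0 := by
          rw [s.condition, ← hsnd, Category.assoc, hkp, comp_zero]
        rw [comp_zero, eq_comm]
        exact zero_of_comp_mono (kernel.ι m) h0
      · apply (cancel_mono k).1
        rw [h₂, kernel.lift_ι]
    have hpb : IsPullback (0 : kernel f ⟶ kernel m) k (kernel.ι m) p :=
      IsPullback.of_isLimit hlim
    have hepi : Epi (0 : kernel f ⟶ kernel m) := hLint _ _ _ _ hpb inferInstance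
    have hid : (𝟙 (kernel m)) = 0 := by
      rw [← cancel_epi (0 : kernel f ⟶ kernel m)]
      simp
    have hn : kernel.ι m = 0 := by
      rw [← Category.id_comp (kernel.ι m), hid, zero_comp]
    exact Preadditive.mono_of_kernel_zero hn
  · -- image factorization: f = q ≫ kernel.ι (coker f), with q epi
    intro X Y f
    set c : Y ⟶ cokernel f := cokernel.π f with hc
    set i : kernel c ⟶ Y := kernel.ι c with hi
    set q : X ⟶ kernel c := kernel.lift c f (cokernel.condition f) with hq
    refine ⟨kernel c, q, i, ?_,
      ⟨cokernel f, c, kernel.condition c, ⟨kernelIsKernel c⟩⟩, kernel.lift_ι _ _ _⟩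
    -- show q is epi.  Key: the square (i, cokernel.π q ; c, 0) is a pushout
    have hqi : q ≫ i = f := kernel.lift_ι _ _ _
    have hsq : i ≫ c = cokernel.π q ≫ (0 : cokernel q ⟶ cokernel f) := by
      rw [comp_zero]; exact kernel.condition c
    have hic : i ≫ c = 0 := kernel.condition c
    have w : ∀ s : PushoutCocone i (cokernel.π q), f ≫ s.inl = 0 := fun s => by
      calc f ≫ s.inl = (q ≫ i) ≫ s.inl := by rw [hqi]
        _ = q ≫ i ≫ s.inl := by rw [Category.assoc]
        _ = q ≫ cokernel.π q ≫ s.inr := by rw [s.condition]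
        _ = 0 := by rw [← Category.assoc, cokernel.condition, zero_comp]
    have hcolim : IsColimit (PushoutCocone.mk _ _ hsq) := by
      refine PushoutCocone.IsColimit.mk hsq
        (fun s => cokernel.desc f s.inl (w s)) (fun s => cokernel.π_desc _ _ _)
        (fun s => ?_) (fun s l h₁ h₂ => ?_)
      · -- 0 ≫ desc = s.inr, i.e. s.inr = 0
        have hinl : c ≫ cokernel.desc f s.inl (w s) = s.inl := cokernel.π_desc _ _ _
        have h0 : cokernel.π q ≫ s.inr = 0 := by
          rw [← s.condition, ← hinl, ← Category.assoc, hic, zero_comp]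
        rw [zero_comp, eq_comm]
        exact zero_of_epi_comp (cokernel.π q) h0
      · apply (cancel_epi c).1
        rw [h₁, cokernel.π_desc]
    have hpo : IsPushout i (cokernel.π q) c (0 : cokernel q ⟶ cokernel f) :=
      IsPushout.of_isColimit hcolim
    have hmono : Mono (0 : cokernel q ⟶ cokernel f) := hRint _ _ _ _ hpo inferInstance
    have hid : (𝟙 (cokernel q)) = 0 := by
      rw [← cancel_mono (0 : cokernel q ⟶ cokernel f)]
      simp
    have he : cokernel.π q = 0 := by
      rw [← Category.comp_id (cokernel.π q), hid, comp_zero]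
    exact Preadditive.epi_of_cokernel_zero he
end

section
/- Let A be a left semi-abelian category. Suppose the square with morphisms a: A → B, b: A → C, c: B → D, d: C → D is a pullback in A, and suppose there exist an object X and morphisms x_B: X → B, x_C: X → C such that x_B is a cokernel (of some morphism) and c ∘ x_B = d ∘ x_C. Then a: A → B is also a cokernel. -/
open CategoryTheory Limits

universe v u

/-- In a left semi-abelian category, given a pullback square a,b,c,d and morphisms
x_B, x_C with x_B a cokernel and c ∘ x_B = d ∘ x_C, the morphism a is also a cokernel. -/
theorem stmt6 {𝒜 : Type u} [Category.{v} 𝒜] [Preadditive 𝒜] [HasKernels 𝒜] [HasCokernels 𝒜]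
    (hLsemi : ∀ {X Y : 𝒜} (f : X ⟶ Y), ∃ (Z : 𝒜) (p : X ⟶ Z) (i : Z ⟶ Y),
      IsCokernelMor p ∧ Mono i ∧ p ≫ i = f)
    {A B C D X : 𝒜} (a : A ⟶ B) (b : A ⟶ C) (c : B ⟶ D) (d : C ⟶ D)
    (hpb : IsPullback a b c d)
    (xB : X ⟶ B) (xC : X ⟶ C) (hxB : IsCokernelMor xB) (hcomm : xB ≫ c = xC ≫ d) :
    IsCokernelMor a := by
  -- lift through the pullback
  have hu : hpb.lift xB xC hcomm ≫ a = xB := hpb.lift_fst xB xC hcomm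
  set u := hpb.lift xB xC hcomm with hudef
  -- factor a = q ≫ i with q a cokernel and i mono
  obtain ⟨Z, q, i, ⟨W', g, wg, ⟨hq⟩⟩, hi, hqi⟩ := hLsemi a
  obtain ⟨W, k, wk, ⟨hk⟩⟩ := hxB
  haveI : Epi xB := epi_of_isColimit_cofork hk
  -- k ≫ u ≫ q = 0 since i is mono
  have h0 : k ≫ (u ≫ q) = 0 := by
    apply (cancel_mono i).mp
    rw [zero_comp, Category.assoc, Category.assoc, hqi, hu, wk]
  obtain ⟨t, ht⟩ := CokernelCofork.IsColimit.desc' hk (u ≫ q) h0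
  have hti : t ≫ i = 𝟙 B := by
    rw [← cancel_epi xB, Category.comp_id]
    have ht' : xB ≫ t = u ≫ q := ht
    rw [reassoc_of% ht', hqi, hu]
  have hit : i ≫ t = 𝟙 Z := by
    apply (cancel_mono i).mp
    rw [Category.assoc, hti, Category.comp_id, Category.id_comp]
  haveI : IsIso i := ⟨t, hit, hti⟩
  have wga : g ≫ a = 0 := by rw [← hqi, reassoc_of% wg, zero_comp]
  refine ⟨W', g, wga, ⟨IsColimit.ofIsoColimit hq (Cofork.ext (asIso i) ?_)⟩⟩
  simpa using hqi
end

section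
/- Let (B, 𝔼, 𝔰) be an extriangulated category and let A ↣ B ↠ C be an 𝔼-triangle realizing δ ∈ 𝔼(C, A). Then for every object X of B, the sequence of abelian groups B(C,X) → B(B,X) → B(A,X) → 𝔼(C,X) → 𝔼(B,X) → 𝔼(A,X), where the first two maps are precomposition with the deflation and inflation respectively, the middle map sends f to f_*δ, and the last two maps are 𝔼 applied contravariantly, is exact. -/
open CategoryTheory Category Limits Opposite ZeroObject

universe v u

namespace ExtStmt

variable (B : Type u) [Category.{v} B] [Preadditive B] [HasZeroObject B] [HasBinaryBiproducts B]

/-- An extriangulated category structure on an additive category `B`,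
following Nakaoka–Palu. `E` is the biadditive extension bifunctor, and `Real δ X a b`
expresses that the sequence `A ⟶ X ⟶ C` (given by `a`, `b`) belongs to the equivalence
class `𝔰(δ)`, i.e. realizes the extension `δ ∈ 𝔼(C, A)`. -/
structure Extriangulated where
  /-- The extension bifunctor `𝔼 : Bᵒᵖ × B ⥤ Ab`. -/
  E : Bᵒᵖ ⥤ B ⥤ AddCommGrpCat.{v}
  /-- `𝔼(C, -)` is additive. -/
  addE₁ : ∀ C : Bᵒᵖ, (E.obj C).Additive
  /-- `𝔼(-, A)` is additive. -/
  addE₂ : ∀ A : B, (E.flip.obj A).Additive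
  /-- The realization: `Real δ X a b` means `A ⟶ X ⟶ C` realizes `δ ∈ 𝔼(C, A)`. -/
  Real : ∀ {A C : B}, ((E.obj (op C)).obj A) → ∀ (X : B), (A ⟶ X) → (X ⟶ C) → Prop
  /-- Every extension is realized by some sequence. -/
  real_ex : ∀ {A C : B} (δ : (E.obj (op C)).obj A),
    ∃ (X : B) (a : A ⟶ X) (b : X ⟶ C), Real δ X a b
  /-- `𝔰(δ)` is closed under the equivalence of sequences. -/
  real_iso : ∀ {A C X X' : B} (δ : (E.obj (op C)).obj A) (a : A ⟶ X) (b : X ⟶ C) (i : X ≅ X'),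
    Real δ X a b → Real δ X' (a ≫ i.hom) (i.inv ≫ b)
  /-- Any two realizations of `δ` are equivalent sequences. -/
  real_unique : ∀ {A C X X' : B} (δ : (E.obj (op C)).obj A) (a : A ⟶ X) (b : X ⟶ C)
    (a' : A ⟶ X') (b' : X' ⟶ C), Real δ X a b → Real δ X' a' b' →
    ∃ i : X ≅ X', a ≫ i.hom = a' ∧ i.hom ≫ b' = b
  /-- Realization of morphisms of extensions: if `f_*δ = h^*δ'` then the pair `(f, h)` is
  realized by some `(f, g, h)`. -/
  real_mor : ∀ {A C A' C' X X' : B} (δ : (E.obj (op C)).obj A) (δ' : (E.obj (op C')).obj A')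
    (f : A ⟶ A') (h : C ⟶ C') (a : A ⟶ X) (b : X ⟶ C) (a' : A' ⟶ X') (b' : X' ⟶ C'),
    Real δ X a b → Real δ' X' a' b' →
    ((E.obj (op C)).map f) δ = ((E.map h.op).app A') δ' →
    ∃ g : X ⟶ X', a ≫ g = f ≫ a' ∧ g ≫ b' = b ≫ h
  /-- Additivity of the realization: `0` is realized by the split sequence. -/
  real_zero : ∀ (A C : B),
    Real (0 : (E.obj (op C)).obj A) (A ⊞ C) biprod.inl biprod.snd
  /-- Additivity of the realization: direct sums. -/
  real_sum : ∀ {A C A' C' X X' : B} (δ : (E.obj (op C)).obj A) (δ' : (E.obj (op C')).obj A')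
    (a : A ⟶ X) (b : X ⟶ C) (a' : A' ⟶ X') (b' : X' ⟶ C'),
    Real δ X a b → Real δ' X' a' b' →
    Real (((E.map (biprod.fst : C ⊞ C' ⟶ C).op).app (A ⊞ A'))
            (((E.obj (op C)).map (biprod.inl : A ⟶ A ⊞ A')) δ)
          + ((E.map (biprod.snd : C ⊞ C' ⟶ C').op).app (A ⊞ A'))
            (((E.obj (op C')).map (biprod.inr : A' ⟶ A ⊞ A')) δ'))
      (X ⊞ X') (biprod.map a a') (biprod.map b b')
  /-- Axiom (ET3). -/
  et3 : ∀ {A C A' C' X X' : B} (δ : (E.obj (op C)).obj A) (δ' : (E.obj (op C')).obj A')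
    (a : A ⟶ X) (b : X ⟶ C) (a' : A' ⟶ X') (b' : X' ⟶ C') (f : A ⟶ A') (g : X ⟶ X'),
    Real δ X a b → Real δ' X' a' b' → a ≫ g = f ≫ a' →
    ∃ h : C ⟶ C', g ≫ b' = b ≫ h ∧ ((E.obj (op C)).map f) δ = ((E.map h.op).app A') δ'
  /-- Axiom (ET3ᵒᵖ). -/
  et3op : ∀ {A C A' C' X X' : B} (δ : (E.obj (op C)).obj A) (δ' : (E.obj (op C')).obj A')
    (a : A ⟶ X) (b : X ⟶ C) (a' : A' ⟶ X') (b' : X' ⟶ C') (g : X ⟶ X') (h : C ⟶ C'),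
    Real δ X a b → Real δ' X' a' b' → g ≫ b' = b ≫ h →
    ∃ f : A ⟶ A', a ≫ g = f ≫ a' ∧ ((E.obj (op C)).map f) δ = ((E.map h.op).app A') δ'
  /-- Axiom (ET4). -/
  et4 : ∀ {A B₀ D C₀ F : B} (δ : (E.obj (op D)).obj A) (δ' : (E.obj (op F)).obj B₀)
    (a : A ⟶ B₀) (a' : B₀ ⟶ D) (bb : B₀ ⟶ C₀) (b' : C₀ ⟶ F),
    Real δ B₀ a a' → Real δ' C₀ bb b' →
    ∃ (E₀ : B) (c' : C₀ ⟶ E₀) (δ'' : (E.obj (op E₀)).obj A) (d : D ⟶ E₀) (e : E₀ ⟶ F),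
      Real δ'' C₀ (a ≫ bb) c' ∧
      Real (((E.obj (op F)).map a') δ') E₀ d e ∧
      a' ≫ d = bb ≫ c' ∧ c' ≫ e = b' ∧
      ((E.map d.op).app A) δ'' = δ ∧
      ((E.obj (op E₀)).map a) δ'' = ((E.map e.op).app B₀) δ'
  /-- Axiom (ET4ᵒᵖ). -/
  et4op : ∀ {A C₀ E₀ D F : B} (δ'' : (E.obj (op E₀)).obj A) (θ : (E.obj (op F)).obj D)
    (c : A ⟶ C₀) (c' : C₀ ⟶ E₀) (d : D ⟶ E₀) (e : E₀ ⟶ F),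
    Real δ'' C₀ c c' → Real θ E₀ d e →
    ∃ (B₀ : B) (a : A ⟶ B₀) (a' : B₀ ⟶ D) (bb : B₀ ⟶ C₀)
      (δ : (E.obj (op D)).obj A) (δ' : (E.obj (op F)).obj B₀),
      Real δ B₀ a a' ∧ Real δ' C₀ bb (c' ≫ e) ∧
      a ≫ bb = c ∧ a' ≫ d = bb ≫ c' ∧
      θ = ((E.obj (op F)).map a') δ' ∧
      ((E.map d.op).app A) δ'' = δ ∧
      ((E.obj (op E₀)).map a) δ'' = ((E.map e.op).app B₀) δ'

variable {B}

/-- The group of extensions `𝔼(C, A)`. -/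
abbrev Extriangulated.Ext (T : Extriangulated B) (C A : B) : Type v :=
  (T.E.obj (op C)).obj A

/-- `f_*δ`, the pushforward of an extension along `f : A ⟶ A'`. -/
abbrev Extriangulated.push (T : Extriangulated B) {C A A' : B} (f : A ⟶ A')
    (δ : T.Ext C A) : T.Ext C A' :=
  ((T.E.obj (op C)).map f) δ

/-- `g^*δ`, the pullback of an extension along `g : C ⟶ C'`. -/
abbrev Extriangulated.pull (T : Extriangulated B) {C C' A : B} (g : C ⟶ C')
    (δ : T.Ext C' A) : T.Ext C A :=
  ((T.E.map g.op).app A) δ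

/-- A pair of composable morphisms is a conflation if it realizes some extension. -/
def Extriangulated.IsConflation (T : Extriangulated B) {A X C : B}
    (a : A ⟶ X) (b : X ⟶ C) : Prop :=
  ∃ δ : T.Ext C A, T.Real δ X a b


set_option linter.unusedSectionVars false

section Hearts

variable {B : Type u} [Category.{v} B] [Preadditive B] [HasZeroObject B] [HasBinaryBiproducts B]

def wRel (Wp : B → Prop) (P : B → Prop) : HomRel (ObjectProperty.FullSubcategory P) :=
  fun {X Y} f g =>
    ∃ (Wo : B) (_ : Wp Wo) (p : X.obj ⟶ Wo) (q : Wo ⟶ Y.obj), p ≫ q = f.hom - g.hom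

abbrev HeartCat (Wp : B → Prop) (P : B → Prop) := CategoryTheory.Quotient (wRel Wp P)

theorem wRel_congruence (Wp P : B → Prop) (hW0 : Wp (0 : B))
    (hWbi : ∀ {X Y : B}, Wp X → Wp Y → Wp (X ⊞ Y)) : Congruence (wRel Wp P) where
  equivalence := by
    refine fun {X Y} => ⟨?_, ?_, ?_⟩
    · intro f
      exact ⟨0, hW0, 0, 0, by simp⟩
    · rintro f g ⟨Wo, hw, p, q, h⟩
      exact ⟨Wo, hw, -p, q, by rw [Preadditive.neg_comp, h]; abel⟩
    · rintro f g h ⟨W₁, hw₁, p₁, q₁, h₁⟩ ⟨W₂, hw₂, p₂, q₂, h₂⟩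
      exact ⟨W₁ ⊞ W₂, hWbi hw₁ hw₂, biprod.lift p₁ p₂, biprod.desc q₁ q₂, by
        rw [biprod.lift_desc, h₁, h₂]; abel⟩
  comp_left := by
    rintro X Y Z f g g' ⟨Wo, hw, p, q, h⟩
    exact ⟨Wo, hw, f.hom ≫ p, q, by rw [Category.assoc, h, Preadditive.comp_sub]; rfl⟩
  comp_right := by
    rintro X Y Z f f' g ⟨Wo, hw, p, q, h⟩
    exact ⟨Wo, hw, p, q ≫ g.hom, by rw [← Category.assoc, h, Preadditive.sub_comp]; rfl⟩

theorem wRel_add (Wp P : B → Prop)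
    (hWbi : ∀ {X Y : B}, Wp X → Wp Y → Wp (X ⊞ Y)) :
    ∀ ⦃X Y : ObjectProperty.FullSubcategory P⦄ (f₁ f₂ g₁ g₂ : X ⟶ Y) (_ : wRel Wp P f₁ f₂)
      (_ : wRel Wp P g₁ g₂), wRel Wp P (f₁ + g₁) (f₂ + g₂) := by
  rintro X Y f₁ f₂ g₁ g₂ ⟨W₁, hw₁, p₁, q₁, h₁⟩ ⟨W₂, hw₂, p₂, q₂, h₂⟩
  exact ⟨W₁ ⊞ W₂, hWbi hw₁ hw₂, biprod.lift p₁ p₂, biprod.desc q₁ q₂, by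
    rw [biprod.lift_desc, h₁, h₂]; change _ = (f₁.hom + g₁.hom) - (f₂.hom + g₂.hom); abel⟩

/-- The heart is preadditive. -/
def heartPreadditive (Wp P : B → Prop) (hW0 : Wp (0 : B))
    (hWbi : ∀ {X Y : B}, Wp X → Wp Y → Wp (X ⊞ Y)) : Preadditive (HeartCat Wp P) :=
  letI := wRel_congruence Wp P hW0 hWbi
  Quotient.preadditive _ (wRel_add Wp P hWbi)

/-- The heart has zero morphisms. -/
def heartZeroMorphisms (Wp P : B → Prop) (hW0 : Wp (0 : B))
    (hWbi : ∀ {X Y : B}, Wp X → Wp Y → Wp (X ⊞ Y)) : HasZeroMorphisms (HeartCat Wp P) :=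
  letI := heartPreadditive Wp P hW0 hWbi
  inferInstance

/-- A full additive subcategory closed under direct summands and isomorphisms. -/
structure IsGoodSubcat (P : B → Prop) : Prop where
  mem_of_iso : ∀ {X Y : B}, (X ≅ Y) → P X → P Y
  zero_mem : P (0 : B)
  biprod_mem : ∀ {X Y : B}, P X → P Y → P (X ⊞ Y)
  summand_mem : ∀ {X Y : B}, P (X ⊞ Y) → P X

/-- `(U, V)` is a cotorsion pair on the extriangulated category `(B, 𝔼, 𝔰)`. -/
structure IsCotorsionPair (T : Extriangulated B) (U V : B → Prop) : Prop where
  subU : IsGoodSubcat U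
  subV : IsGoodSubcat V
  ext_vanish : ∀ {u v : B}, U u → V v → ∀ δ : T.Ext u v, δ = 0
  cone : ∀ X : B, ∃ (v u : B) (f : v ⟶ u) (g : u ⟶ X), V v ∧ U u ∧ T.IsConflation f g
  cocone : ∀ X : B, ∃ (v u : B) (f : X ⟶ v) (g : v ⟶ u), V v ∧ U u ∧ T.IsConflation f g

/-- `((S,Tc),(U,V))` is a twin cotorsion pair: two cotorsion pairs with `𝔼(S, V) = 0`. -/
def IsTwinCotorsionPair (T : Extriangulated B) (S Tc U V : B → Prop) : Prop :=
  IsCotorsionPair T S Tc ∧ IsCotorsionPair T U V ∧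
    ∀ {s v : B}, S s → V v → ∀ δ : T.Ext s v, δ = 0

/-- Projective object of an extriangulated category. -/
def IsProjObj (T : Extriangulated B) (P : B) : Prop :=
  ∀ {A X C : B} (a : A ⟶ X) (b : X ⟶ C), T.IsConflation a b →
    ∀ c : P ⟶ C, ∃ d : P ⟶ X, d ≫ b = c

/-- Injective object of an extriangulated category. -/
def IsInjObj (T : Extriangulated B) (I : B) : Prop :=
  ∀ {A X C : B} (a : A ⟶ X) (b : X ⟶ C), T.IsConflation a b →
    ∀ c : A ⟶ I, ∃ d : X ⟶ I, a ≫ d = c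

/-- `B` has enough projectives. -/
def HasEnoughProj (T : Extriangulated B) : Prop :=
  ∀ C : B, ∃ (A P : B) (f : A ⟶ P) (p : P ⟶ C), IsProjObj T P ∧ T.IsConflation f p

/-- `B` has enough injectives. -/
def HasEnoughInj (T : Extriangulated B) : Prop :=
  ∀ A : B, ∃ (I C : B) (i : A ⟶ I) (p : I ⟶ C), IsInjObj T I ∧ T.IsConflation i p

/-- `W = Tc ∩ U`. -/
def Wpred (Tc U : B → Prop) : B → Prop := fun X => Tc X ∧ U X

/-- `CoCone(P, Q)`: objects `X` with a conflation `X ↣ P' ↠ Q'`, `P' ∈ P`, `Q' ∈ Q`. -/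
def CoConeOf (T : Extriangulated B) (P Q : B → Prop) : B → Prop := fun X =>
  ∃ (p q : B) (f : X ⟶ p) (g : p ⟶ q), P p ∧ Q q ∧ T.IsConflation f g

/-- `Cone(P, Q)`: objects `X` with a conflation `P' ↣ Q' ↠ X`, `P' ∈ P`, `Q' ∈ Q`. -/
def ConeOf (T : Extriangulated B) (P Q : B → Prop) : B → Prop := fun X =>
  ∃ (p q : B) (f : p ⟶ q) (g : q ⟶ X), P p ∧ Q q ∧ T.IsConflation f g

/-- `P * Q`: objects `X` with a conflation `P' ↣ X ↠ Q'`, `P' ∈ P`, `Q' ∈ Q`. -/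
def StarOf (T : Extriangulated B) (P Q : B → Prop) : B → Prop := fun X =>
  ∃ (p q : B) (f : p ⟶ X) (g : X ⟶ q), P p ∧ Q q ∧ T.IsConflation f g

/-- `B⁻ = CoCone(W, S)`. -/
def Bminus (T : Extriangulated B) (S Tc U : B → Prop) : B → Prop :=
  CoConeOf T (Wpred Tc U) S

/-- `B⁺ = Cone(V, W)`. -/
def Bplus (T : Extriangulated B) (Tc U V : B → Prop) : B → Prop :=
  ConeOf T V (Wpred Tc U)

/-- `H = B⁻ ∩ B⁺`, the objects of the heart. -/
def HeartPred (T : Extriangulated B) (S Tc U V : B → Prop) : B → Prop := fun X =>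
  Bminus T S Tc U X ∧ Bplus T Tc U V X

/-- The heart `H̄ = H/[W]` of a twin cotorsion pair. -/
abbrev TwinHeart (T : Extriangulated B) (S Tc U V : B → Prop) :=
  HeartCat (Wpred Tc U) (HeartPred T S Tc U V)

/-- Zero morphisms on the heart of a twin cotorsion pair. -/
def heartZeroOfTwin (T : Extriangulated B) {S Tc U V : B → Prop}
    (h : IsTwinCotorsionPair T S Tc U V) (P : B → Prop) :
    HasZeroMorphisms (HeartCat (Wpred Tc U) P) :=
  heartZeroMorphisms _ _ ⟨h.1.subV.zero_mem, h.2.1.subU.zero_mem⟩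
    (fun hx hy => ⟨h.1.subV.biprod_mem hx.1 hy.1, h.2.1.subU.biprod_mem hx.2 hy.2⟩)

end Hearts


/-!
Each exactness statement comes from comparing `A ↣ X₀ ↠ C` with a split conflation realizing `0`
(`0 ↣ X ↠ X`, `X ↣ X ↠ 0` or `X ↣ X ⊞ Y ↠ Y`): the vanishing of a composite, or of a pushed or
pulled extension, is exactly the compatibility that (ET3), (ET3ᵒᵖ) or the realization of morphisms
requires, and the morphism they produce is the wanted factorization. At `𝔼(X₀, X)`, realize `ε` by
`X ↣ Y ↠ X₀`; (ET4ᵒᵖ) applied to it and `δ` gives a conflation `X ↣ B₀ ↠ A` realizing `a^*ε`,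
together with `i_*ε = b^*δ'`. If `a^*ε = 0` the inflation `i` has a retraction `r`, so
`ε = r_*(i_*ε) = b^*(r_*δ')`.
-/

namespace Extriangulated

variable {B : Type u} [Category.{v} B] [Preadditive B] [HasZeroObject B] [HasBinaryBiproducts B]
  (T : Extriangulated B)

lemma push_comp {C A A' A'' : B} (f : A ⟶ A') (g : A' ⟶ A'') (δ : T.Ext C A) :
    T.push (f ≫ g) δ = T.push g (T.push f δ) := by
  simp [push, Functor.map_comp]

lemma push_id {C A : B} (δ : T.Ext C A) : T.push (𝟙 A) δ = δ := by
  simp [push]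

lemma zero_push {C A A' : B} (δ : T.Ext C A) : T.push (0 : A ⟶ A') δ = 0 := by
  have := T.addE₁ (op C)
  simp [push, Functor.map_zero]

lemma push_zero {C A A' : B} (f : A ⟶ A') : T.push f (0 : T.Ext C A) = 0 :=
  map_zero _

lemma pull_comp {C C' C'' A : B} (f : C ⟶ C') (g : C' ⟶ C'') (δ : T.Ext C'' A) :
    T.pull (f ≫ g) δ = T.pull f (T.pull g δ) := by
  simp [pull, Functor.map_comp]

lemma pull_id {C A : B} (δ : T.Ext C A) : T.pull (𝟙 C) δ = δ := by
  simp [pull]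

lemma zero_pull {C C' A : B} (δ : T.Ext C' A) : T.pull (0 : C ⟶ C') δ = 0 := by
  have := T.addE₂ A
  change ((T.E.flip.obj A).map (0 : C ⟶ C').op) δ = 0
  rw [op_zero, Functor.map_zero]
  rfl

lemma pull_zero {C C' A : B} (g : C ⟶ C') : T.pull g (0 : T.Ext C' A) = 0 :=
  map_zero _

lemma pull_push {C C' A A' : B} (g : C ⟶ C') (f : A ⟶ A') (δ : T.Ext C' A) :
    T.pull g (T.push f δ) = T.push f (T.pull g δ) :=
  congrArg (fun φ => φ δ) ((T.E.map g.op).naturality f)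

lemma real_zero_zero_id (Z : B) : T.Real (0 : T.Ext Z 0) Z 0 (𝟙 Z) := by
  have hfst : (biprod.fst : (0 : B) ⊞ Z ⟶ 0) = 0 := (isZero_zero B).eq_of_tgt _ _
  have hinv : (biprod.snd : (0 : B) ⊞ Z ⟶ Z) ≫ biprod.inr = 𝟙 _ := by
    rw [← biprod.total, hfst, zero_comp, zero_add]
  simpa using T.real_iso 0 biprod.inl biprod.snd ⟨biprod.snd, biprod.inr, hinv, by simp⟩
    (T.real_zero 0 Z)

lemma real_zero_id_zero (Z : B) : T.Real (0 : T.Ext 0 Z) Z (𝟙 Z) 0 := by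
  have hsnd : (biprod.snd : Z ⊞ (0 : B) ⟶ 0) = 0 := (isZero_zero B).eq_of_tgt _ _
  have hinv : (biprod.fst : Z ⊞ (0 : B) ⟶ Z) ≫ biprod.inl = 𝟙 _ := by
    rw [← biprod.total, hsnd, zero_comp, add_zero]
  have hinl : (biprod.inl : Z ⟶ Z ⊞ (0 : B)) ≫ biprod.snd = 0 := (isZero_zero B).eq_of_tgt _ _
  simpa [hinl] using T.real_iso 0 biprod.inl biprod.snd ⟨biprod.fst, biprod.inl, hinv, by simp⟩
    (T.real_zero Z 0)

namespace Real

variable {T} {A C X₀ : B} {δ : T.Ext C A} {a : A ⟶ X₀} {b : X₀ ⟶ C}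

lemma exists_retraction_of_eq_zero (h : T.Real δ X₀ a b) (hδ : δ = 0) :
    ∃ r : X₀ ⟶ A, a ≫ r = 𝟙 A := by
  subst hδ
  obtain ⟨i, hi, -⟩ := T.real_unique 0 a b biprod.inl biprod.snd h (T.real_zero A C)
  exact ⟨i.hom ≫ biprod.fst, by rw [← Category.assoc, hi, biprod.inl_fst]⟩

lemma comp_eq_zero (h : T.Real δ X₀ a b) : a ≫ b = 0 := by
  obtain ⟨g, hag, hgb⟩ := T.real_mor δ 0 0 (𝟙 C) a b 0 (𝟙 C) h (T.real_zero_zero_id C)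
    (by rw [map_zero]; exact T.zero_push δ)
  rw [comp_id, comp_id] at hgb
  rw [← hgb, hag, zero_comp]

lemma push_self_eq_zero (h : T.Real δ X₀ a b) : T.push a δ = 0 := by
  obtain ⟨f, haf, hf⟩ := T.et3op δ 0 a b (𝟙 X₀) 0 (𝟙 X₀) 0 h (T.real_zero_id_zero X₀)
    ((isZero_zero B).eq_of_tgt _ _)
  rw [comp_id, comp_id] at haf
  rw [haf]
  exact hf.trans (T.pull_zero 0)

lemma pull_self_eq_zero (h : T.Real δ X₀ a b) : T.pull b δ = 0 := by
  obtain ⟨f, -, hf⟩ := T.et3op 0 δ biprod.inl biprod.snd a b biprod.snd b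
    (T.real_zero A X₀) h rfl
  exact hf.symm.trans (T.push_zero f)

lemma exists_lift_of_pull_eq_zero {X Y : B} {ε : T.Ext C X} {x : X ⟶ Y} {y : Y ⟶ C}
    (h : T.Real ε Y x y) {g : X₀ ⟶ C} (hg : T.pull g ε = 0) : ∃ l : X₀ ⟶ Y, l ≫ y = g := by
  obtain ⟨m, -, hm⟩ := T.real_mor 0 ε (𝟙 X) g biprod.inl biprod.snd x y (T.real_zero X X₀) h
    (by rw [map_zero]; exact hg.symm)
  exact ⟨biprod.inr ≫ m, by rw [Category.assoc, hm, biprod.inr_snd_assoc]⟩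

variable {X : B}

lemma inflation_comp_eq_zero_iff (h : T.Real δ X₀ a b) (u : X₀ ⟶ X) :
    a ≫ u = 0 ↔ ∃ w : C ⟶ X, u = b ≫ w := by
  refine ⟨fun hau => ?_, fun ⟨w, hw⟩ => by rw [hw, ← Category.assoc, h.comp_eq_zero, zero_comp]⟩
  obtain ⟨w, hw, -⟩ := T.et3 δ 0 a b 0 (𝟙 X) 0 u h (T.real_zero_zero_id X) (by simp [hau])
  exact ⟨w, by rwa [comp_id] at hw⟩

lemma push_eq_zero_iff (h : T.Real δ X₀ a b) (f : A ⟶ X) :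
    T.push f δ = 0 ↔ ∃ u : X₀ ⟶ X, f = a ≫ u := by
  refine ⟨fun hf => ?_, fun ⟨u, hu⟩ => by rw [hu, T.push_comp, h.push_self_eq_zero, push_zero]⟩
  obtain ⟨g, hg, -⟩ := T.real_mor δ 0 f (𝟙 C) a b biprod.inl biprod.snd h (T.real_zero X C)
    (by rw [map_zero]; exact hf)
  exact ⟨g ≫ biprod.fst, by rw [← Category.assoc, hg, Category.assoc, biprod.inl_fst, comp_id]⟩

lemma pull_deflation_eq_zero_iff (h : T.Real δ X₀ a b) (ε : T.Ext C X) :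
    T.pull b ε = 0 ↔ ∃ f : A ⟶ X, ε = T.push f δ := by
  refine ⟨fun hε => ?_, fun ⟨f, hf⟩ => by rw [hf, T.pull_push, h.pull_self_eq_zero, push_zero]⟩
  obtain ⟨Y, x, y, hY⟩ := T.real_ex ε
  obtain ⟨l, hl⟩ := hY.exists_lift_of_pull_eq_zero hε
  obtain ⟨f, -, hf⟩ := T.et3op δ ε a b x y l (𝟙 C) h hY (by rw [hl, comp_id])
  exact ⟨f, (hf.trans (T.pull_id ε)).symm⟩

lemma pull_inflation_eq_zero_iff (h : T.Real δ X₀ a b) (ε : T.Ext X₀ X) :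
    T.pull a ε = 0 ↔ ∃ ε' : T.Ext C X, ε = T.pull b ε' := by
  refine ⟨fun hε => ?_, fun ⟨ε', hε'⟩ => by rw [hε', ← T.pull_comp, h.comp_eq_zero, zero_pull]⟩
  obtain ⟨Y, x, y, hY⟩ := T.real_ex ε
  obtain ⟨B₀, i, _, _, δ₁, δ₂, hδ₁, -, -, -, -, hpull, hpush⟩ := T.et4op ε δ x y a b hY h
  obtain ⟨r, hr⟩ := hδ₁.exists_retraction_of_eq_zero (hpull.symm.trans hε)
  refine ⟨T.push r δ₂, ?_⟩
  calc ε = T.push r (T.push i ε) := by rw [← T.push_comp, hr, push_id]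
    _ = T.push r (T.pull b δ₂) := congrArg (T.push r) hpush
    _ = T.pull b (T.push r δ₂) := (T.pull_push _ _ _).symm

end Real

end Extriangulated

/-- Liu–Nakaoka/Nakaoka–Palu: the contravariant long exact sequence
`B(C,X) → B(B,X) → B(A,X) → 𝔼(C,X) → 𝔼(B,X) → 𝔼(A,X)`
associated to an 𝔼-triangle `A ↣ B ↠ C` (exactness at the four middle spots). -/
theorem stmt8 {B : Type u} [Category.{v} B] [Preadditive B] [HasZeroObject B]
    [HasBinaryBiproducts B] (T : Extriangulated B) {A C X₀ : B}
    (δ : T.Ext C A) (a : A ⟶ X₀) (b : X₀ ⟶ C) (h : T.Real δ X₀ a b) (X : B) :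
    (∀ u : X₀ ⟶ X, a ≫ u = 0 ↔ ∃ w : C ⟶ X, u = b ≫ w) ∧
    (∀ f : A ⟶ X, T.push f δ = 0 ↔ ∃ u : X₀ ⟶ X, f = a ≫ u) ∧
    (∀ ε : T.Ext C X, T.pull b ε = 0 ↔ ∃ f : A ⟶ X, ε = T.push f δ) ∧
    (∀ ε : T.Ext X₀ X, T.pull a ε = 0 ↔ ∃ ε' : T.Ext C X, ε = T.pull b ε') :=
  ⟨h.inflation_comp_eq_zero_iff, h.push_eq_zero_iff, h.pull_deflation_eq_zero_iff,
    h.pull_inflation_eq_zero_iff⟩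
end ExtStmt
end

section
/- Let (B, 𝔼, 𝔰) be an extriangulated category with twin cotorsion pair ((S,T),(U,V)) satisfying T = U, so W = T. Suppose X ∈ CoCone(S, S), i.e., there exists a conflation X ↣ S₁ ↠ S₀ with S₀, S₁ ∈ S. If a morphism f: X → Y factors through some object of W, then f factors through some object of S. -/
open CategoryTheory Category Limits Opposite ZeroObject

universe v u

namespace ExtStmt

variable (B : Type u) [Category.{v} B] [Preadditive B] [HasZeroObject B] [HasBinaryBiproducts B]

variable {B}

set_option linter.unusedSectionVars false

section Factorization

variable {B : Type u} [Category.{v} B] [Preadditive B] [HasZeroObject B] [HasBinaryBiproducts B]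

/-- Comparing the conflation with the split one realizing `p_*δ = 0` gives the extension. -/
theorem Extriangulated.exists_comp_eq_of_push_eq_zero (T : Extriangulated B) {A X C W : B}
    {δ : T.Ext C A} {a : A ⟶ X} {b : X ⟶ C} (hδ : T.Real δ X a b) (p : A ⟶ W)
    (hp : T.push p δ = 0) : ∃ g : X ⟶ W, a ≫ g = p := by
  obtain ⟨g, hag, -⟩ := T.real_mor δ 0 p (𝟙 C) a b biprod.inl biprod.snd hδ
    (T.real_zero W C) (by simpa using hp)
  exact ⟨g ≫ biprod.fst, by rw [reassoc_of% hag, biprod.inl_fst, comp_id]⟩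

theorem CoConeOf.exists_factorization (T : Extriangulated B) {P Q W : B → Prop}
    (hQW : ∀ {c w : B}, Q c → W w → ∀ δ : T.Ext c w, δ = 0) {X Y : B}
    (hX : CoConeOf T P Q X) {f : X ⟶ Y}
    (hf : ∃ (Wo : B) (_ : W Wo) (p : X ⟶ Wo) (q : Wo ⟶ Y), p ≫ q = f) :
    ∃ (Po : B) (_ : P Po) (p : X ⟶ Po) (q : Po ⟶ Y), p ≫ q = f := by
  obtain ⟨P₁, Q₀, a, b, hP₁, hQ₀, δ, hδ⟩ := hX
  obtain ⟨Wo, hWo, p, q, rfl⟩ := hf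
  obtain ⟨g, rfl⟩ := T.exists_comp_eq_of_push_eq_zero hδ p (hQW hQ₀ hWo _)
  exact ⟨P₁, hP₁, a, g ≫ q, (assoc _ _ _).symm⟩

end Factorization

theorem stmt12_general {B : Type u} [Category.{v} B] [Preadditive B] [HasZeroObject B]
    [HasBinaryBiproducts B] (T : Extriangulated B) (S Tc U V : B → Prop)
    (h : IsTwinCotorsionPair T S Tc U V)
    {X Y : B} (hX : CoConeOf T S S X) (f : X ⟶ Y)
    (hf : ∃ (Wo : B) (_ : Wpred Tc U Wo) (p : X ⟶ Wo) (q : Wo ⟶ Y), p ≫ q = f) :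
    ∃ (So : B) (_ : S So) (p : X ⟶ So) (q : So ⟶ Y), p ≫ q = f :=
  CoConeOf.exists_factorization T (fun hs hw => h.1.ext_vanish hs hw.1) hX hf

/-- For a twin cotorsion pair with `T = U` (so `W = T`): if `X ∈ CoCone(S,S)` and a
morphism `f : X ⟶ Y` factors through an object of `W`, then it factors through an
object of `S`. -/
theorem stmt12 {B : Type u} [Category.{v} B] [Preadditive B] [HasZeroObject B]
    [HasBinaryBiproducts B] (T : Extriangulated B) (S Tc U V : B → Prop)
    (h : IsTwinCotorsionPair T S Tc U V) (hTU : Tc = U)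
    {X Y : B} (hX : CoConeOf T S S X) (f : X ⟶ Y)
    (hf : ∃ (Wo : B) (_ : Wpred Tc U Wo) (p : X ⟶ Wo) (q : Wo ⟶ Y), p ≫ q = f) :
    ∃ (So : B) (_ : S So) (p : X ⟶ So) (q : So ⟶ Y), p ≫ q = f :=
  stmt12_general T S Tc U V h hX f hf
end ExtStmt
end
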